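/- Subtraction as the limit of the XOR/carry iteration: let a b : ℤ and define u, v : ℕ → ℤ by u 0 = a ^^^ (~~~b) ^^^ 1, v 0 = 2 * ((a &&& (~~~b)) ^^^ ((a ^^^ (~~~b)) &&& 1)), u (k+1) = u k ^^^ v k, and v (k+1) = 2 * (u k &&& v k). Then in the 2-adic integers ℤ_[2], the sequence ((u k : ℤ_[2]))_k converges to ((a - b : ℤ) : ℤ_[2]) and the carry sequence ((v k : ℤ_[2]))_k converges to 0; that is, (a-b, 0) is the limiting fixed point of the carry map started at the three-operand sum a + bᶜ + 1. -/

import Mathlib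

/-!
Since `x ^^^ y` is the carry-free sum of `x` and `y` and `x &&& y` marks the carries,
`(x ^^^ y) + 2 * (x &&& y) = x + y`; so each step of the iteration preserves `u k + v k`, and the
full-adder version of the same identity gives `u 0 + v 0 = a + ~~~b + 1 = a - b`. Meanwhile each
step shifts the carry one place left, so `2 ^ k ∣ v k` and `v k → 0` in `ℤ_[2]`, whence `u k → a - b`.
-/

instance : XorOp ℤ := ⟨Int.xor⟩
instance : AndOp ℤ := ⟨Int.land⟩

open Filter Topology

namespace Int

theorem complement_eq_neg_sub_one (b : ℤ) : ~~~b = -b - 1 := by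
  cases b <;> simp [Complement.complement, Int.not, Int.negSucc_eq]; omega

theorem bit_xor_bit (b m c n) : bit b m ^^^ bit c n = bit (xor b c) (m ^^^ n) := lxor_bit b m c n

theorem bit_land_bit (b m c n) : bit b m &&& bit c n = bit (b && c) (m &&& n) := land_bit b m c n

theorem eq_zero_of_forall_two_pow_dvd {d : ℤ} (h : ∀ n : ℕ, (2 : ℤ) ^ n ∣ d) : d = 0 := by
  refine eq_zero_of_abs_lt_dvd (h d.natAbs) ?_
  rw [abs_eq_natAbs]
  exact_mod_cast Nat.lt_two_pow_self

/-- Bit identities on `ℤ` cannot be proved by plain recursion on `div2`, which fixes `-1`;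
instead the defect of the identity is shown to double along `div2`. -/
theorem eq_zero_of_eq_two_mul_comp {α : Type*} (σ : α → α) (D : α → ℤ)
    (h : ∀ x, D x = 2 * D (σ x)) (x : α) : D x = 0 := by
  refine eq_zero_of_forall_two_pow_dvd fun n => ?_
  induction n generalizing x with
  | zero => exact one_dvd _
  | succ n ih => rw [h, pow_succ']; exact mul_dvd_mul_left 2 (ih _)

theorem xor_add_two_mul_land (x y : ℤ) : (x ^^^ y) + 2 * (x &&& y) = x + y := by
  have step : ∀ b m c n, (bit b m ^^^ bit c n) + 2 * (bit b m &&& bit c n) - (bit b m + bit c n)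
      = 2 * ((m ^^^ n) + 2 * (m &&& n) - (m + n)) := by
    intro b m c n
    simp only [bit_xor_bit, bit_land_bit]
    simp only [bit_val]
    cases b <;> cases c <;> simp <;> ring
  have := eq_zero_of_eq_two_mul_comp (fun p : ℤ × ℤ => (div2 p.1, div2 p.2))
    (fun p => (p.1 ^^^ p.2) + 2 * (p.1 &&& p.2) - (p.1 + p.2))
    (fun p => by simpa only [bit_decomp] using step (bodd p.1) (div2 p.1) (bodd p.2) (div2 p.2))
    (x, y)
  exact sub_eq_zero.1 this

theorem xor_xor_add_two_mul_carry (x y z : ℤ) :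
    (x ^^^ y ^^^ z) + 2 * ((x &&& y) ^^^ ((x ^^^ y) &&& z)) = x + y + z := by
  have step : ∀ b₁ m₁ b₂ m₂ b₃ m₃,
      let x := bit b₁ m₁; let y := bit b₂ m₂; let z := bit b₃ m₃
      (x ^^^ y ^^^ z) + 2 * ((x &&& y) ^^^ ((x ^^^ y) &&& z)) - (x + y + z)
        = 2 * ((m₁ ^^^ m₂ ^^^ m₃) + 2 * ((m₁ &&& m₂) ^^^ ((m₁ ^^^ m₂) &&& m₃)) - (m₁ + m₂ + m₃)) := by
    intro b₁ m₁ b₂ m₂ b₃ m₃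
    simp only [bit_xor_bit, bit_land_bit]
    simp only [bit_val]
    cases b₁ <;> cases b₂ <;> cases b₃ <;> simp <;> ring
  have := eq_zero_of_eq_two_mul_comp (fun p : ℤ × ℤ × ℤ => (div2 p.1, div2 p.2.1, div2 p.2.2))
    (fun p => (p.1 ^^^ p.2.1 ^^^ p.2.2) + 2 * ((p.1 &&& p.2.1) ^^^ ((p.1 ^^^ p.2.1) &&& p.2.2))
      - (p.1 + p.2.1 + p.2.2))
    (fun p => by
      simpa only [bit_decomp] using
        step (bodd p.1) (div2 p.1) (bodd p.2.1) (div2 p.2.1) (bodd p.2.2) (div2 p.2.2))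
    (x, y, z)
  exact sub_eq_zero.1 this

theorem two_pow_dvd_land_of_dvd_right {n : ℕ} {x y : ℤ} (h : (2 : ℤ) ^ n ∣ y) :
    (2 : ℤ) ^ n ∣ x &&& y := by
  induction n generalizing x y with
  | zero => exact one_dvd _
  | succ n ih =>
    obtain ⟨c, rfl⟩ := h
    have hy : (2 : ℤ) ^ (n + 1) * c = bit false (2 ^ n * c) := by rw [bit_val]; simp; ring
    rw [hy, ← bit_decomp x, bit_land_bit, Bool.and_false, bit_val, pow_succ']
    simpa using mul_dvd_mul_left 2 (ih (x := div2 x) (dvd_mul_right _ c))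

end Int

theorem PadicInt.tendsto_zero_of_pow_dvd {p : ℕ} [Fact p.Prime] {x : ℕ → ℤ}
    (h : ∀ k, (p : ℤ) ^ k ∣ x k) : Tendsto (fun k => (x k : ℤ_[p])) atTop (𝓝 0) := by
  rw [tendsto_zero_iff_norm_tendsto_zero]
  have hp : (1 : ℝ) < p := by exact_mod_cast (Fact.out : p.Prime).one_lt
  refine squeeze_zero (fun _ => norm_nonneg _) (fun k => ?_)
    (tendsto_pow_atTop_nhds_zero_of_lt_one (inv_nonneg.2 (by positivity)) (inv_lt_one_of_one_lt₀ hp))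
  rw [inv_pow, ← zpow_natCast, ← zpow_neg]
  exact PadicInt.norm_int_le_pow_iff_dvd.2 (by exact_mod_cast h k)

section XorCarry

variable {u v : ℕ → ℤ}

theorem xor_carry_add_eq (hu : ∀ k, u (k + 1) = u k ^^^ v k)
    (hv : ∀ k, v (k + 1) = 2 * (u k &&& v k)) (k : ℕ) : u k + v k = u 0 + v 0 := by
  induction k with
  | zero => rfl
  | succ k ih => rw [hu, hv, Int.xor_add_two_mul_land, ih]

theorem two_pow_dvd_xor_carry (hv : ∀ k, v (k + 1) = 2 * (u k &&& v k)) (k : ℕ) :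
    (2 : ℤ) ^ k ∣ v k := by
  induction k with
  | zero => exact one_dvd _
  | succ k ih => rw [hv, pow_succ']; exact mul_dvd_mul_left 2 (Int.two_pow_dvd_land_of_dvd_right ih)

end XorCarry

/-- Subtraction as the limit of the XOR/carry iteration started at the bitwise
symmetric functions of the three addends `a`, `~~~b`, `1`: the sequence `u`
converges 2-adically to `a - b` and the carry sequence `v` converges to `0`. -/
theorem subtraction_xor_carry_limit (a b : ℤ) (u v : ℕ → ℤ)
    (hu0 : u 0 = a ^^^ (~~~b) ^^^ 1)
    (hv0 : v 0 = 2 * ((a &&& (~~~b)) ^^^ ((a ^^^ (~~~b)) &&& 1)))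
    (hu : ∀ k, u (k + 1) = u k ^^^ v k)
    (hv : ∀ k, v (k + 1) = 2 * (u k &&& v k)) :
    Filter.Tendsto (fun k => ((u k : ℤ_[2]))) Filter.atTop (nhds ((a - b : ℤ) : ℤ_[2])) ∧
    Filter.Tendsto (fun k => ((v k : ℤ_[2]))) Filter.atTop (nhds 0) := by
  have start : u 0 + v 0 = a - b := by
    rw [hu0, hv0, Int.xor_xor_add_two_mul_carry, Int.complement_eq_neg_sub_one]
    ring
  have carry_lim : Tendsto (fun k => (v k : ℤ_[2])) atTop (𝓝 0) :=
    PadicInt.tendsto_zero_of_pow_dvd (by exact_mod_cast two_pow_dvd_xor_carry hv)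
  refine ⟨?_, carry_lim⟩
  have u_eq : ∀ k, (u k : ℤ_[2]) = ((a - b : ℤ) : ℤ_[2]) - v k := fun k => by
    rw [← start, ← xor_carry_add_eq hu hv k]; push_cast; ring
  simpa only [u_eq, sub_zero] using tendsto_const_nhds.sub carry_lim
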